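/- Rule R7 is sound and locally complete: for a variable X, a letter a ∈ Σ, and words u, v over Σ ∪ Γ, the equation X·u = a·v is satisfiable if and only if either the equation (X·u)[X ↦ ε] = (a·v)[X ↦ ε] is satisfiable, or the equation (X'·u)[X ↦ a·X'] = v[X ↦ a·X'] is satisfiable, where X' is a fresh variable and [X ↦ w] denotes replacing every occurrence of X by the word w. -/

import Mathlib

/-- Extension of a substitution `h : Γ → Σ*` to a monoid homomorphism on words over `Σ ∪ Γ`
that fixes letters of the alphabet. -/
def applySub {A V : Type} (h : V → List A) (u : List (A ⊕ V)) : List A :=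
  u.flatMap (Sum.elim (fun a => [a]) h)

/-- Homomorphic replacement `u[X ↦ w]` of the variable `X` by the word `w` in `u`. -/
def repl {A V : Type} [DecidableEq V] (X : V) (w : List (A ⊕ V)) (u : List (A ⊕ V)) :
    List (A ⊕ V) :=
  u.flatMap (Sum.elim (fun a => [Sum.inl a]) (fun Y => if Y = X then w else [Sum.inr Y]))

/-!
A solution `h` of `X u = a v` either erases `X`, and then solves the first equation, or
`h X = a t`; in the latter case `h` with `X' ↦ t` solves the second equation, since
`X ↦ a X'` followed by `X' ↦ t` acts on `u` and `v` as `h` does. Conversely, solutions of the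
equations after a replacement `X ↦ w` give solutions before it by setting `X` to the image of `w`.
-/

open Function

section
variable {A V : Type}

@[simp]
lemma applySub_nil (h : V → List A) : applySub h [] = [] := rfl

@[simp]
lemma applySub_cons_inl (h : V → List A) (a : A) (u : List (A ⊕ V)) :
    applySub h (Sum.inl a :: u) = a :: applySub h u := rfl

@[simp]
lemma applySub_cons_inr (h : V → List A) (Y : V) (u : List (A ⊕ V)) :
    applySub h (Sum.inr Y :: u) = h Y ++ applySub h u := rfl

lemma applySub_congr {h g : V → List A} {u : List (A ⊕ V)}
    (hg : ∀ Y, Sum.inr Y ∈ u → h Y = g Y) : applySub h u = applySub g u := by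
  induction u with
  | nil => rfl
  | cons x u ih =>
    have hu := ih fun Y hY => hg Y (List.mem_cons_of_mem x hY)
    cases x with
    | inl a => simp [hu]
    | inr Y => simp [hu, hg Y List.mem_cons_self]

lemma applySub_update_of_not_mem [DecidableEq V] (h : V → List A) {X : V} (w : List A)
    {u : List (A ⊕ V)} (hX : Sum.inr X ∉ u) : applySub (update h X w) u = applySub h u :=
  applySub_congr fun Y hY => update_of_ne (fun e : Y = X => hX (e ▸ hY)) w h

lemma applySub_repl [DecidableEq V] (h : V → List A) (X : V) (w u : List (A ⊕ V)) :
    applySub h (repl X w u) = applySub (update h X (applySub h w)) u := by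
  induction u with
  | nil => rfl
  | cons x u ih =>
    rw [repl, List.flatMap_cons, ← repl, applySub, List.flatMap_append, ← applySub,
      ← applySub, ih]
    rcases x with a | Y
    · rfl
    · by_cases hY : Y = X
      · subst hY; simp
      · simp [hY]

end

/-- Rule R7 is sound and locally complete. -/
theorem stmt_4 {A V : Type} [DecidableEq V] (X X' : V) (a : A) (u v : List (A ⊕ V))
    (hXX' : X' ≠ X) (hX'u : Sum.inr X' ∉ u) (hX'v : Sum.inr X' ∉ v) :
    (∃ h : V → List A, applySub h (Sum.inr X :: u) = applySub h (Sum.inl a :: v)) ↔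
      ((∃ h : V → List A,
          applySub h (repl X [] (Sum.inr X :: u)) = applySub h (repl X [] (Sum.inl a :: v))) ∨
       (∃ h : V → List A,
          applySub h (repl X [Sum.inl a, Sum.inr X'] (Sum.inr X' :: u)) =
            applySub h (repl X [Sum.inl a, Sum.inr X'] v))) := by
  simp only [applySub_repl]
  constructor
  · rintro ⟨h, hh⟩
    rcases hX : h X with _ | ⟨b, t⟩
    · refine Or.inl ⟨h, ?_⟩
      rwa [applySub_nil, ← hX, update_eq_self]
    · rw [applySub_cons_inr, applySub_cons_inl, hX, List.cons_append, List.cons.injEq] at hh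
      obtain ⟨rfl, hh⟩ := hh
      have hupdate : update (update h X' t) X (applySub (update h X' t) [Sum.inl b, Sum.inr X'])
          = update h X' t := by
        simp only [applySub_cons_inl, applySub_cons_inr, update_self, applySub_nil,
          List.append_nil, ← hX]
        rw [update_comm hXX', update_eq_self]
      refine Or.inr ⟨update h X' t, ?_⟩
      rw [hupdate, applySub_cons_inr, update_self, applySub_update_of_not_mem _ _ hX'u,
        applySub_update_of_not_mem _ _ hX'v, hh]
  · rintro (⟨h, hh⟩ | ⟨h, hh⟩)
    · exact ⟨_, hh⟩
    · refine ⟨update h X (applySub h [Sum.inl a, Sum.inr X']), ?_⟩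
      rw [applySub_cons_inr, update_of_ne hXX'] at hh
      simpa using hh
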